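/- Fix K ≥ 1 and α > 0 with Γ(K, α) = α^K e^{-α}. The function f(μ) = μ·Γ(K, μ)/Γ(K) is strictly increasing on (0, α) and strictly decreasing on (α, ∞). -/

import Mathlib

/-! Since `d/dμ Γ(K, μ) = -μ^(K-1) e^{-μ}`, the derivative of `μ Γ(K, μ)` is
`Γ(K, μ) - μ^K e^{-μ} = (g(μ) - 1) μ^K e^{-μ}`, where `g(μ) = Γ(K, μ) e^μ μ^{-K}` and `g(α) = 1`.
So it suffices that `g` is strictly decreasing on `(0, ∞)`. By the recurrence
`Γ(K + 1, μ) = μ^K e^{-μ} + K Γ(K, μ)`, the sign of `g'(μ)` is that of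
`μ Γ(K, μ) - Γ(K + 1, μ) = -∫_μ^∞ (z - μ) z^(K-1) e^{-z} dz < 0`. -/

open MeasureTheory Real

/-- Upper incomplete Gamma function `Γ(K, x) = ∫_x^∞ z^(K-1) e^(-z) dz` for integer `K`. -/
noncomputable def Ginc (K : ℕ) (x : ℝ) : ℝ := ∫ z in Set.Ioi x, z ^ (K - 1) * Real.exp (-z)

lemma setIntegral_Ioi_pos {f : ℝ → ℝ} {x : ℝ} (hf : IntegrableOn f (Set.Ioi x))
    (hpos : ∀ z ∈ Set.Ioi x, 0 < f z) : 0 < ∫ z in Set.Ioi x, f z := by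
  rw [setIntegral_pos_iff_support_of_nonneg_ae
    (ae_restrict_of_forall_mem measurableSet_Ioi fun z hz => (hpos z hz).le) hf]
  calc (0 : ENNReal) < volume (Set.Ioi x) := by simp
    _ ≤ volume (Function.support f ∩ Set.Ioi x) :=
      measure_mono fun z hz => ⟨(hpos z hz).ne', hz⟩

lemma integrableOn_pow_mul_exp_neg_Ioi (n : ℕ) (x : ℝ) :
    IntegrableOn (fun z : ℝ => z ^ n * exp (-z)) (Set.Ioi x) := by
  have hIoi : IntegrableOn (fun z : ℝ => z ^ n * exp (-z)) (Set.Ioi 0) := by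
    refine (GammaIntegral_convergent (s := n + 1) (by positivity)).congr_fun
      (fun z _ => ?_) measurableSet_Ioi
    simp [mul_comm]
  have hIoc : IntegrableOn (fun z : ℝ => z ^ n * exp (-z)) (Set.Ioc (min x 0) 0) :=
    (by fun_prop : Continuous fun z : ℝ => z ^ n * exp (-z)).integrableOn_Ioc
  refine (hIoc.union hIoi).mono_set fun z (hz : x < z) => ?_
  rcases le_or_gt z 0 with h | h
  · exact Or.inl ⟨(min_le_left x 0).trans_lt hz, h⟩
  · exact Or.inr h

lemma Ginc_succ (j : ℕ) (x : ℝ) : Ginc (j + 1) x = ∫ z in Set.Ioi x, z ^ j * exp (-z) := rfl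

lemma hasDerivAt_Ginc (j : ℕ) (x : ℝ) : HasDerivAt (Ginc (j + 1)) (-(x ^ j * exp (-x))) x := by
  have hG : Ginc (j + 1) = fun y => Ginc (j + 1) 0 - ∫ z in (0 : ℝ)..y, z ^ j * exp (-z) := by
    ext y
    rw [Ginc_succ, Ginc_succ, ← intervalIntegral.integral_Ioi_sub_Ioi'
      (integrableOn_pow_mul_exp_neg_Ioi j 0) (integrableOn_pow_mul_exp_neg_Ioi j y)]
    ring
  rw [hG]
  exact ((by fun_prop : Continuous fun z : ℝ => z ^ j * exp (-z)).integral_hasStrictDerivAt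
    0 x).hasDerivAt.const_sub _

lemma Ginc_succ_succ (j : ℕ) (x : ℝ) :
    Ginc (j + 2) x = x ^ (j + 1) * exp (-x) + (j + 1) * Ginc (j + 1) x := by
  have hderiv : ∀ y ∈ Set.Ici x, HasDerivAt (fun z : ℝ => -(z ^ (j + 1) * exp (-z)))
      (y ^ (j + 1) * exp (-y) - (j + 1) * (y ^ j * exp (-y))) y := by
    intro y _
    refine ((hasDerivAt_pow (j + 1) y).mul (hasDerivAt_neg y).exp).neg.congr_deriv ?_
    push_cast
    ring
  have hlim : Filter.Tendsto (fun z : ℝ => -(z ^ (j + 1) * exp (-z))) Filter.atTop (nhds 0) := by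
    simpa using (tendsto_pow_mul_exp_neg_atTop_nhds_zero (j + 1)).neg
  have hI₁ := integrableOn_pow_mul_exp_neg_Ioi (j + 1) x
  have hI₀ := (integrableOn_pow_mul_exp_neg_Ioi j x).const_mul ((j : ℝ) + 1)
  have hibp := integral_Ioi_of_hasDerivAt_of_tendsto' hderiv (hI₁.sub hI₀) hlim
  rw [integral_sub hI₁ hI₀, integral_const_mul] at hibp
  simp only [Ginc_succ]
  linarith

lemma mul_Ginc_lt_Ginc_succ (j : ℕ) {x : ℝ} (hx : 0 ≤ x) :
    x * Ginc (j + 1) x < Ginc (j + 2) x := by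
  have hI₁ := integrableOn_pow_mul_exp_neg_Ioi (j + 1) x
  have hI₀ := (integrableOn_pow_mul_exp_neg_Ioi j x).const_mul x
  have hpos := setIntegral_Ioi_pos (f := fun z => z ^ (j + 1) * exp (-z) - x * (z ^ j * exp (-z)))
    (hI₁.sub hI₀) fun z (hz : x < z) => by
      have : 0 < (z - x) * (z ^ j * exp (-z)) :=
        mul_pos (sub_pos.2 hz) (mul_pos (pow_pos (hx.trans_lt hz) j) (exp_pos _))
      linarith [show z ^ (j + 1) * exp (-z) - x * (z ^ j * exp (-z))
        = (z - x) * (z ^ j * exp (-z)) by ring]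
  rw [integral_sub hI₁ hI₀, integral_const_mul] at hpos
  simp only [Ginc_succ]
  linarith

noncomputable def gincRatio (K : ℕ) (x : ℝ) : ℝ := Ginc K x * exp x / x ^ K

lemma Ginc_sub_eq_gincRatio_sub_one_mul (K : ℕ) {x : ℝ} (hx : x ≠ 0) :
    Ginc K x - x ^ K * exp (-x) = (gincRatio K x - 1) * (x ^ K * exp (-x)) := by
  rw [gincRatio, exp_neg]
  field_simp

lemma hasDerivAt_gincRatio (j : ℕ) {x : ℝ} (hx : x ≠ 0) :
    HasDerivAt (gincRatio (j + 1))
      (exp x / x ^ (j + 2) * (x * Ginc (j + 1) x - Ginc (j + 2) x)) x := by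
  refine (((hasDerivAt_Ginc j x).mul (hasDerivAt_exp x)).div (hasDerivAt_pow (j + 1) x)
    (pow_ne_zero _ hx)).congr_deriv ?_
  rw [Pi.mul_apply, Ginc_succ_succ, exp_neg]
  field_simp
  push_cast
  ring

lemma strictAntiOn_gincRatio (j : ℕ) : StrictAntiOn (gincRatio (j + 1)) (Set.Ioi 0) := by
  have hderiv : ∀ x ∈ Set.Ioi (0 : ℝ), HasDerivAt (gincRatio (j + 1))
      (exp x / x ^ (j + 2) * (x * Ginc (j + 1) x - Ginc (j + 2) x)) x :=
    fun x hx => hasDerivAt_gincRatio j (ne_of_gt hx)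
  refine strictAntiOn_of_hasDerivWithinAt_neg (convex_Ioi 0)
    (fun x hx => (hderiv x hx).continuousAt.continuousWithinAt)
    (fun x hx => (hderiv x (interior_subset hx)).hasDerivWithinAt) fun x hx => ?_
  have hx : 0 < x := by rwa [interior_Ioi] at hx
  exact mul_neg_of_pos_of_neg (by positivity) (sub_neg.2 (mul_Ginc_lt_Ginc_succ j hx.le))

lemma hasDerivAt_mul_Ginc (j : ℕ) (x : ℝ) :
    HasDerivAt (fun μ => μ * Ginc (j + 1) μ) (Ginc (j + 1) x - x ^ (j + 1) * exp (-x)) x := by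
  refine ((hasDerivAt_id x).mul (hasDerivAt_Ginc j x)).congr_deriv ?_
  simp only [id_eq, pow_succ]
  ring

/-- `f(μ) = μ Γ(K, μ)/Γ(K)` is strictly increasing on `(0, α)` and
strictly decreasing on `(α, ∞)`, where `Γ(K, α) = α^K e^{-α}`, `α > 0`. -/
theorem stmt12 (K : ℕ) (hK : 1 ≤ K) (α : ℝ) (hα : 0 < α)
    (hroot : Ginc K α = α ^ K * Real.exp (-α)) :
    StrictMonoOn (fun μ : ℝ => μ * Ginc K μ / (Nat.factorial (K - 1) : ℝ)) (Set.Ioo 0 α) ∧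
    StrictAntiOn (fun μ : ℝ => μ * Ginc K μ / (Nat.factorial (K - 1) : ℝ)) (Set.Ioi α) := by
  obtain ⟨j, rfl⟩ : ∃ j, K = j + 1 := ⟨K - 1, by omega⟩
  have hc : (0 : ℝ) < (j + 1 - 1).factorial := by positivity
  have hf : ∀ x, HasDerivAt (fun μ : ℝ => μ * Ginc (j + 1) μ / (j + 1 - 1).factorial)
      ((Ginc (j + 1) x - x ^ (j + 1) * exp (-x)) / (j + 1 - 1).factorial) x :=
    fun x => (hasDerivAt_mul_Ginc j x).div_const _
  have hratio : gincRatio (j + 1) α = 1 := by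
    rw [← sub_eq_zero, ← mul_eq_zero_iff_right (by positivity : α ^ (j + 1) * exp (-α) ≠ 0),
      ← Ginc_sub_eq_gincRatio_sub_one_mul _ hα.ne', hroot, sub_self]
  constructor
  · refine strictMonoOn_of_hasDerivWithinAt_pos (convex_Ioo 0 α)
      (fun x _ => (hf x).continuousAt.continuousWithinAt) (fun x _ => (hf x).hasDerivWithinAt)
      fun x hx => ?_
    obtain ⟨hx0, hxα⟩ : 0 < x ∧ x < α := by rwa [interior_Ioo] at hx
    have hgt : 1 < gincRatio (j + 1) x := hratio ▸ strictAntiOn_gincRatio j hx0 hα hxα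
    rw [Ginc_sub_eq_gincRatio_sub_one_mul _ hx0.ne']
    exact div_pos (mul_pos (sub_pos.2 hgt) (by positivity)) hc
  · refine strictAntiOn_of_hasDerivWithinAt_neg (convex_Ioi α)
      (fun x _ => (hf x).continuousAt.continuousWithinAt) (fun x _ => (hf x).hasDerivWithinAt)
      fun x hx => ?_
    have hxα : α < x := by rwa [interior_Ioi] at hx
    have hx0 : 0 < x := hα.trans hxα
    have hlt : gincRatio (j + 1) x < 1 := hratio ▸ strictAntiOn_gincRatio j hα hx0 hxα
    rw [Ginc_sub_eq_gincRatio_sub_one_mul _ hx0.ne']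
    exact div_neg_of_neg_of_pos (mul_neg_of_neg_of_pos (sub_neg.2 hlt) (by positivity)) hc
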